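/- arXiv:1506.07623 — 4 statements merged into one kernel-verified Lean document; each statement's English description precedes it below -/
import Mathlib

section
/- Let u be a drift function. The following three assertions are equivalent: (i) the identity map is a Banach-space isomorphism between 𝓕¹_u and 𝓔¹_u (i.e. it is continuous in both directions); (ii) there exist a ∈ [0,1) and b ∈ ℝ such that Pu ≤ a·u + b on 𝐗; (iii) u ∈ 𝓔¹_u. -/
open MeasureTheory Filter Set Topology
open scoped ENNReal NNReal ENat

noncomputable section

/-- The shift on path space. -/
def pshift {X : Type*} (ω : ℕ → X) : ℕ → X := fun n => ω (n + 1)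

/-- The natural filtration on path space: the σ-algebra generated by the first `n+1`
coordinates. -/
def pathFiltration (X : Type*) [MeasurableSpace X] (n : ℕ) : MeasurableSpace (ℕ → X) :=
  MeasurableSpace.comap (fun ω (i : Fin (n + 1)) => ω (i : ℕ)) inferInstance

/-- A Markov chain on `X`, given by the family of its path-space laws `ℙ_x`. -/
structure MarkovChain (X : Type*) [MeasurableSpace X] where
  law : X → Measure (ℕ → X)
  prob : ∀ x, IsProbabilityMeasure (law x)
  meas_law : Measurable law
  start : ∀ x, (law x).map (fun ω => ω 0) = Measure.dirac x
  markov : ∀ (x : X) (n : ℕ) (A : Set (ℕ → X)),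
      MeasurableSet[pathFiltration X n] A → ∀ g : (ℕ → X) → ℝ≥0∞, Measurable g →
      ∫⁻ ω in A, g (fun k => ω (k + n)) ∂law x = ∫⁻ ω in A, ∫⁻ η, g η ∂law (ω n) ∂law x

variable {X : Type*} [MeasurableSpace X]

/-- A stopping time on path space, with values in `ℕ∞`. -/
def IsPathStoppingTime (τ : (ℕ → X) → ℕ∞) : Prop :=
  ∀ n : ℕ, MeasurableSet[pathFiltration X n] {ω | τ ω = (n : ℕ∞)}

/-- `τ` is θ-compatible: `ℙ_x(τ = 0) = 0` and, almost everywhere, `τ ≥ 2` implies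
`τ ∘ θ = τ - 1`. -/
def ThetaCompatible (M : MarkovChain X) (τ : (ℕ → X) → ℕ∞) : Prop :=
  (∀ x, M.law x {ω | τ ω = 0} = 0) ∧
    ∀ x, ∀ᵐ ω ∂M.law x, 2 ≤ τ ω → τ (pshift ω) = τ ω - 1

/-- The Markov operator `P` on nonnegative functions: `Pf(x) = 𝔼_x f(X_1)`. -/
def Pop (M : MarkovChain X) (f : X → ℝ≥0∞) (x : X) : ℝ≥0∞ := ∫⁻ ω, f (ω 1) ∂M.law x

/-- The induced operator `Q`: `Qg(x) = ∫_{τ<∞} g(X_τ) dℙ_x`. -/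
def Qop (M : MarkovChain X) (τ : (ℕ → X) → ℕ∞) (g : X → ℝ≥0∞) (x : X) : ℝ≥0∞ :=
  ∫⁻ ω in {ω | τ ω ≠ ⊤}, g (ω (τ ω).toNat) ∂M.law x

/-- The operator `S`: `Sf(x) = ∫_{τ=1} f(X_1) dℙ_x`. -/
def Sop (M : MarkovChain X) (τ : (ℕ → X) → ℕ∞) (f : X → ℝ≥0∞) (x : X) : ℝ≥0∞ :=
  ∫⁻ ω in {ω | τ ω = 1}, f (ω 1) ∂M.law x

/-- The operator `R`: `Rf(x) = ∫_{τ<∞} (f(X_0) + ⋯ + f(X_{τ-1})) dℙ_x`. -/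
def Rop (M : MarkovChain X) (τ : (ℕ → X) → ℕ∞) (f : X → ℝ≥0∞) (x : X) : ℝ≥0∞ :=
  ∫⁻ ω in {ω | τ ω ≠ ⊤}, ∑ k ∈ Finset.range (τ ω).toNat, f (ω k) ∂M.law x

/-- `𝔼_x τ`, with values in `[0,∞]`. -/
def EtauE (M : MarkovChain X) (τ : (ℕ → X) → ℕ∞) (x : X) : ℝ≥0∞ :=
  ∫⁻ ω, (τ ω : ℝ≥0∞) ∂M.law x

/-- `μ` is `P`-invariant: `∫ Pf dμ = ∫ f dμ` for every bounded nonnegative borelian `f`. -/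
def PInvariant (M : MarkovChain X) (μ : Measure X) : Prop :=
  ∀ f : X → ℝ≥0∞, Measurable f → (∃ C : ℝ≥0∞, C ≠ ⊤ ∧ ∀ x, f x ≤ C) →
    ∫⁻ x, Pop M f x ∂μ = ∫⁻ x, f x ∂μ

/-- `ν` is `Q`-invariant: `∫ Qf dν = ∫ f dν` for every bounded nonnegative borelian `f`. -/
def QInvariant (M : MarkovChain X) (τ : (ℕ → X) → ℕ∞) (ν : Measure X) : Prop :=
  ∀ f : X → ℝ≥0∞, Measurable f → (∃ C : ℝ≥0∞, C ≠ ⊤ ∧ ∀ x, f x ≤ C) →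
    ∫⁻ x, Qop M τ f x ∂ν = ∫⁻ x, f x ∂ν

/-- `ν = S*μ`, i.e. `ν(A) = ∫ S𝟙_A dμ` for every borelian `A`. -/
def SstarEq (M : MarkovChain X) (τ : (ℕ → X) → ℕ∞) (μ ν : Measure X) : Prop :=
  ∀ A : Set X, MeasurableSet A → ν A = ∫⁻ x, Sop M τ (A.indicator 1) x ∂μ

/-- `m = R*ν`, i.e. `m(A) = ∫ R𝟙_A dν` for every borelian `A`. -/
def RstarEq (M : MarkovChain X) (τ : (ℕ → X) → ℕ∞) (ν m : Measure X) : Prop :=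
  ∀ A : Set X, MeasurableSet A → m A = ∫⁻ x, Rop M τ (A.indicator 1) x ∂ν

/-- the real-valued Markov operator -/
def Pr (M : MarkovChain X) (f : X → ℝ) (x : X) : ℝ := ∫ ω, f (ω 1) ∂M.law x

/-- the real-valued induced operator -/
def Qr (M : MarkovChain X) (τ : (ℕ → X) → ℕ∞) (g : X → ℝ) (x : X) : ℝ :=
  ∫ ω in {ω | τ ω ≠ ⊤}, g (ω (τ ω).toNat) ∂M.law x

/-- the real-valued operator `S` -/
def Sr (M : MarkovChain X) (τ : (ℕ → X) → ℕ∞) (f : X → ℝ) (x : X) : ℝ :=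
  ∫ ω in {ω | τ ω = 1}, f (ω 1) ∂M.law x

/-- the real-valued operator `R` -/
def Rr (M : MarkovChain X) (τ : (ℕ → X) → ℕ∞) (f : X → ℝ) (x : X) : ℝ :=
  ∫ ω in {ω | τ ω ≠ ⊤}, ∑ k ∈ Finset.range (τ ω).toNat, f (ω k) ∂M.law x

/-- `𝔼_x τ` as a real number. -/
def Etau (M : MarkovChain X) (τ : (ℕ → X) → ℕ∞) (x : X) : ℝ := (EtauE M τ x).toReal

/-- `B_u = sup (Pu - u) + 1`. -/
def Bu (M : MarkovChain X) (u : X → ℝ) : ℝ :=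
  sSup (Set.range fun x => Pr M u x - u x) + 1

/-- the weight `u - Pu + B_u` defining the space `𝓔_u`. -/
def wE (M : MarkovChain X) (u : X → ℝ) : X → ℝ := fun x => u x - Pr M u x + Bu M u

/-- `u` is a drift function: `u ≥ 1`, `u - Pu` is bounded below and, with
`B_u = sup (Pu - u) + 1`, the functions `Qu`, `𝔼τ/u` and `P(u-Pu+B_u)/(u-Pu+B_u)` are
bounded. -/
structure IsDrift (M : MarkovChain X) (τ : (ℕ → X) → ℕ∞) (u : X → ℝ) : Prop where
  meas : Measurable u
  one_le : ∀ x, 1 ≤ u x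
  int_one : ∀ x, Integrable (fun ω => u (ω 1)) (M.law x)
  bdd : BddAbove (Set.range fun x => Pr M u x - u x)
  etau_ne_top : ∀ x, EtauE M τ x ≠ ⊤
  qu_bdd : ∃ C : ℝ, ∀ x, Qr M τ u x ≤ C
  etau_div_bdd : ∃ C : ℝ, ∀ x, Etau M τ x ≤ C * u x
  pw_bdd : ∃ C : ℝ, ∀ x, Pr M (wE M u) x ≤ C * wE M u x

/-- membership in the weighted space `𝓕^p_v` : `f` is borelian and `|f| ≤ C v^{1/p}`. -/
def MemWp (v : X → ℝ) (p : ℝ) (f : X → ℝ) : Prop :=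
  Measurable f ∧ ∃ C : ℝ, ∀ x, |f x| ≤ C * v x ^ (1 / p)

/-- the norm of the weighted space `𝓕^p_v` : `‖f‖ = sup_x |f(x)|/v(x)^{1/p}`. -/
def normWp (v : X → ℝ) (p : ℝ) (f : X → ℝ) : ℝ := ⨆ x, |f x| / v x ^ (1 / p)

/-- ergodicity among a class of invariant measures: a finite nonzero invariant measure is
ergodic if it is not a nontrivial convex combination of two distinct invariant probability
measures. -/
def ErgodicAmong (Inv : Measure X → Prop) (μ : Measure X) : Prop :=
  μ ≠ 0 ∧ ∀ (ν₁ ν₂ : Measure X) (t : ℝ≥0∞), Inv ν₁ → Inv ν₂ →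
    IsProbabilityMeasure ν₁ → IsProbabilityMeasure ν₂ → 0 < t → t < 1 →
    μ = μ Set.univ • (t • ν₁ + (1 - t) • ν₂) → ν₁ = ν₂

/-! Both (ii) and (iii) say that `u ≤ C (u - Pu + B_u)` for some `C`: for (ii) this is a
rearrangement, using `u - Pu + B_u ≥ 1` to absorb the constant `b`. The reverse bound
`u - Pu + B_u ≤ (1 + |B_u|) u` holds for every drift function because `Pu ≥ 1`, so (iii)
makes the two weights comparable, and comparable weights define the same weighted space with
equivalent norms. -/

section WeightedSpaces

variable {v w f : X → ℝ}

lemma memWp_one_iff : MemWp v 1 f ↔ Measurable f ∧ ∃ C : ℝ, ∀ x, |f x| ≤ C * v x := by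
  simp only [MemWp, div_one, Real.rpow_one]

lemma memWp_one_iff_of_nonneg (hf : ∀ x, 0 ≤ f x) :
    MemWp v 1 f ↔ Measurable f ∧ ∃ C : ℝ, ∀ x, f x ≤ C * v x := by
  simp only [memWp_one_iff, abs_of_nonneg (hf _)]

lemma normWp_one_eq {ι : Type*} {v f : ι → ℝ} : normWp v 1 f = ⨆ x, |f x| / v x := by
  simp only [normWp, div_one, Real.rpow_one]

lemma exists_pos_le_mul {ι : Type*} {v w : ι → ℝ} (hw : ∀ x, 0 ≤ w x)
    (h : ∃ c : ℝ, ∀ x, v x ≤ c * w x) :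
    ∃ c : ℝ, 0 < c ∧ ∀ x, v x ≤ c * w x := by
  obtain ⟨c, hc⟩ := h
  exact ⟨max c 1, by positivity,
    fun x => (hc x).trans (mul_le_mul_of_nonneg_right (le_max_left c 1) (hw x))⟩

lemma MemWp.of_le_mul (hv : ∀ x, 0 ≤ v x) (hvw : ∃ c : ℝ, ∀ x, v x ≤ c * w x)
    (hf : MemWp v 1 f) : MemWp w 1 f := by
  rw [memWp_one_iff] at hf ⊢
  obtain ⟨hmeas, hK⟩ := hf
  obtain ⟨K, hK0, hK⟩ := exists_pos_le_mul hv hK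
  obtain ⟨c, hc⟩ := hvw
  exact ⟨hmeas, K * c, fun x => (hK x).trans <| by
    rw [mul_assoc]; exact mul_le_mul_of_nonneg_left (hc x) hK0.le⟩

lemma normWp_le_mul_of_le_mul (hv : ∀ x, 0 < v x) (hw : ∀ x, 0 < w x) {c : ℝ} (hc : 0 ≤ c)
    (hvw : ∀ x, v x ≤ c * w x) (hf : MemWp v 1 f) : normWp w 1 f ≤ c * normWp v 1 f := by
  obtain ⟨-, K, hK⟩ := memWp_one_iff.1 hf
  have hbdd : BddAbove (Set.range fun x => |f x| / v x) :=
    ⟨K, by rintro _ ⟨x, rfl⟩; exact (div_le_iff₀ (hv x)).2 (hK x)⟩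
  rw [normWp_one_eq, normWp_one_eq]
  refine Real.iSup_le (fun x => ?_) (mul_nonneg hc (Real.iSup_nonneg fun x => div_nonneg (abs_nonneg _) (hv x).le))
  calc |f x| / w x ≤ c * (|f x| / v x) := by
        rw [mul_div_assoc', div_le_div_iff₀ (hw x) (hv x)]
        calc |f x| * v x ≤ |f x| * (c * w x) := mul_le_mul_of_nonneg_left (hvw x) (abs_nonneg _)
          _ = c * |f x| * w x := by ring
    _ ≤ c * ⨆ y, |f y| / v y := mul_le_mul_of_nonneg_left (le_ciSup hbdd x) hc

lemma memWp_one_iff_and_normWp_le_of_comparable (hv : ∀ x, 1 ≤ v x) (hw : ∀ x, 1 ≤ w x)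
    (hvw : ∃ c : ℝ, ∀ x, v x ≤ c * w x) (hwv : ∃ d : ℝ, ∀ x, w x ≤ d * v x) :
    (∀ f : X → ℝ, MemWp v 1 f ↔ MemWp w 1 f) ∧
      (∃ C : ℝ, 0 < C ∧ ∀ f : X → ℝ, MemWp v 1 f → normWp w 1 f ≤ C * normWp v 1 f) ∧
      (∃ C : ℝ, 0 < C ∧ ∀ f : X → ℝ, MemWp w 1 f → normWp v 1 f ≤ C * normWp w 1 f) := by
  have hv0 : ∀ x, 0 < v x := fun x => one_pos.trans_le (hv x)
  have hw0 : ∀ x, 0 < w x := fun x => one_pos.trans_le (hw x)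
  obtain ⟨c, hc0, hc⟩ := exists_pos_le_mul (fun x => (hw0 x).le) hvw
  obtain ⟨d, hd0, hd⟩ := exists_pos_le_mul (fun x => (hv0 x).le) hwv
  exact ⟨fun f => ⟨MemWp.of_le_mul (fun x => (hv0 x).le) ⟨c, hc⟩,
      MemWp.of_le_mul (fun x => (hw0 x).le) ⟨d, hd⟩⟩,
    ⟨c, hc0, fun f => normWp_le_mul_of_le_mul hv0 hw0 hc0.le hc⟩,
    ⟨d, hd0, fun f => normWp_le_mul_of_le_mul hw0 hv0 hd0.le hd⟩⟩

end WeightedSpaces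

lemma exists_le_mul_add_iff_exists_le_mul {ι : Type*} {u p : ι → ℝ} {B : ℝ}
    (hw : ∀ x, 1 ≤ u x - p x + B) :
    (∃ a b : ℝ, 0 ≤ a ∧ a < 1 ∧ ∀ x, p x ≤ a * u x + b) ↔
      ∃ C : ℝ, ∀ x, u x ≤ C * (u x - p x + B) := by
  constructor
  · rintro ⟨a, b, -, ha1, hp⟩
    have ha : 0 < 1 - a := sub_pos.2 ha1
    refine ⟨(1 + |b - B|) / (1 - a), fun x => ?_⟩
    rw [div_mul_eq_mul_div, le_div_iff₀ ha]
    have hbB : b - B ≤ |b - B| * (u x - p x + B) :=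
      (le_abs_self _).trans (le_mul_of_one_le_right (abs_nonneg _) (hw x))
    linarith [hp x]
  · rintro ⟨C, hC⟩
    obtain ⟨C, hC1, hC⟩ : ∃ C : ℝ, 1 ≤ C ∧ ∀ x, u x ≤ C * (u x - p x + B) :=
      ⟨max C 1, le_max_right C 1, fun x => (hC x).trans
        (mul_le_mul_of_nonneg_right (le_max_left C 1) (zero_le_one.trans (hw x)))⟩
    have hC0 : 0 < C := one_pos.trans_le hC1
    refine ⟨1 - C⁻¹, B, sub_nonneg.2 (inv_le_one_of_one_le₀ hC1), sub_lt_self 1 (inv_pos.2 hC0),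
      fun x => ?_⟩
    have key : C * p x ≤ C * ((1 - C⁻¹) * u x + B) := by
      have := hC x
      rw [mul_add, ← mul_assoc, mul_sub, mul_inv_cancel₀ hC0.ne']
      linarith
    exact le_of_mul_le_mul_left key hC0

namespace IsDrift

variable {M : MarkovChain X} {τ : (ℕ → X) → ℕ∞} {u : X → ℝ}

lemma one_le_wE (hu : IsDrift M τ u) (x : X) : 1 ≤ wE M u x := by
  have h : Pr M u x - u x ≤ sSup (Set.range fun y => Pr M u y - u y) := le_csSup hu.bdd ⟨x, rfl⟩
  simp only [wE, Bu]
  linarith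

lemma one_le_Pr (hu : IsDrift M τ u) (x : X) : 1 ≤ Pr M u x := by
  have := M.prob x
  calc (1 : ℝ) = ∫ _ω, (1 : ℝ) ∂M.law x := by simp
    _ ≤ Pr M u x := integral_mono (integrable_const 1) (hu.int_one x) fun ω => hu.one_le _

lemma wE_le_mul (hu : IsDrift M τ u) (x : X) : wE M u x ≤ (1 + |Bu M u|) * u x := by
  have hB : Bu M u ≤ |Bu M u| * u x :=
    (le_abs_self _).trans (le_mul_of_one_le_right (abs_nonneg _) (hu.one_le x))
  simp only [wE]
  linarith [hu.one_le_Pr x]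

end IsDrift

theorem stmt6_general (M : MarkovChain X) (τ : (ℕ → X) → ℕ∞)
    (u : X → ℝ) (hu : IsDrift M τ u) :
    (((∀ f : X → ℝ, MemWp u 1 f ↔ MemWp (wE M u) 1 f) ∧
        (∃ C : ℝ, 0 < C ∧ ∀ f : X → ℝ, MemWp u 1 f →
          normWp (wE M u) 1 f ≤ C * normWp u 1 f) ∧
        (∃ C : ℝ, 0 < C ∧ ∀ f : X → ℝ, MemWp (wE M u) 1 f →
          normWp u 1 f ≤ C * normWp (wE M u) 1 f)) ↔
      (∃ a b : ℝ, 0 ≤ a ∧ a < 1 ∧ ∀ x, Pr M u x ≤ a * u x + b)) ∧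
    ((∃ a b : ℝ, 0 ≤ a ∧ a < 1 ∧ ∀ x, Pr M u x ≤ a * u x + b) ↔
      MemWp (wE M u) 1 u) := by
  have hu0 : ∀ x, 0 ≤ u x := fun x => zero_le_one.trans (hu.one_le x)
  have h_ii_iii : (∃ a b : ℝ, 0 ≤ a ∧ a < 1 ∧ ∀ x, Pr M u x ≤ a * u x + b) ↔
      MemWp (wE M u) 1 u := by
    rw [exists_le_mul_add_iff_exists_le_mul hu.one_le_wE, memWp_one_iff_of_nonneg hu0]
    exact (and_iff_right hu.meas).symm
  have hu_mem : MemWp u 1 u :=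
    (memWp_one_iff_of_nonneg hu0).2 ⟨hu.meas, 1, fun x => (one_mul _).ge⟩
  refine ⟨⟨fun h_i => h_ii_iii.2 ((h_i.1 u).1 hu_mem), fun h_ii => ?_⟩, h_ii_iii⟩
  obtain ⟨-, hu_le⟩ := (memWp_one_iff_of_nonneg hu0).1 (h_ii_iii.1 h_ii)
  exact memWp_one_iff_and_normWp_le_of_comparable hu.one_le hu.one_le_wE hu_le
    ⟨_, hu.wE_le_mul⟩

/-- Lemma 2.7: for a drift function `u`, the identity map being a Banach space isomorphism
between `𝓕¹_u` and `𝓔¹_u`, the existence of `a ∈ [0,1)` and `b` with `Pu ≤ a u + b`,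
and `u ∈ 𝓔¹_u`, are equivalent. -/
theorem stmt6 (M : MarkovChain X) (τ : (ℕ → X) → ℕ∞)
    (hst : IsPathStoppingTime τ) (hθ : ThetaCompatible M τ)
    (u : X → ℝ) (hu : IsDrift M τ u) :
    (((∀ f : X → ℝ, MemWp u 1 f ↔ MemWp (wE M u) 1 f) ∧
        (∃ C : ℝ, 0 < C ∧ ∀ f : X → ℝ, MemWp u 1 f →
          normWp (wE M u) 1 f ≤ C * normWp u 1 f) ∧
        (∃ C : ℝ, 0 < C ∧ ∀ f : X → ℝ, MemWp (wE M u) 1 f →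
          normWp u 1 f ≤ C * normWp (wE M u) 1 f)) ↔
      (∃ a b : ℝ, 0 ≤ a ∧ a < 1 ∧ ∀ x, Pr M u x ≤ a * u x + b)) ∧
    ((∃ a b : ℝ, 0 ≤ a ∧ a < 1 ∧ ∀ x, Pr M u x ≤ a * u x + b) ↔
      MemWp (wE M u) 1 u) :=
  stmt6_general M τ u hu

end
end

section
/- Let u be a drift function, x ∈ 𝐗, and α ∈ ℝ₊. Then sup_{n∈ℕ} Σ_{k=0}^{n} P^k(u − Pu)(x)/(k+1)^α ≤ u(x). -/
open MeasureTheory Filter Set Topology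
open scoped ENNReal NNReal ENat

noncomputable section

variable {X : Type*} [MeasurableSpace X]

/-! Since `P` is linear on integrable functions, `P^k(u - Pu) = P^k u - P^{k+1} u`, so the sum
is an Abel sum of the differences of the nonnegative sequence `P^k u(x)` against the decreasing
weights `(k+1)^{-α}`; such a sum is at most its first term `u(x)`. The integrability needed at
each step comes from `P^k u ≤ u + k B_u`. -/

theorem sum_range_sub_mul_le_of_antitone {a w : ℕ → ℝ} (ha : ∀ k, 0 ≤ a k)
    (hw : Antitone w) (hw0 : ∀ k, 0 ≤ w k) (n : ℕ) :
    ∑ k ∈ Finset.range n, (a k - a (k + 1)) * w k ≤ a 0 * w 0 := by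
  suffices h : ∑ k ∈ Finset.range n, (a k - a (k + 1)) * w k + a n * w n ≤ a 0 * w 0 by
    nlinarith [mul_nonneg (ha n) (hw0 n)]
  induction n with
  | zero => simp
  | succ n ih =>
    rw [Finset.sum_range_succ]
    nlinarith [ha (n + 1), hw n.le_succ]

theorem measurable_Pr (M : MarkovChain X) {f : X → ℝ} (hf : Measurable f) :
    Measurable (Pr M f) := by
  let κ : ProbabilityTheory.Kernel X (ℕ → X) := ⟨M.law, M.meas_law⟩
  have : ProbabilityTheory.IsMarkovKernel κ := ⟨M.prob⟩
  exact ((hf.comp ((measurable_pi_apply 1).comp measurable_snd)).stronglyMeasurable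
    |>.integral_kernel_prod_right' (κ := κ)).measurable

section Iterates

variable (M : MarkovChain X) {u v f g : X → ℝ} {b c : ℝ} {y : X}

theorem integrable_comp_one_of_le (hv : Measurable v) (hv0 : 0 ≤ v) (hvu : ∀ z, v z ≤ u z + c)
    (hu : Integrable (fun ω => u (ω 1)) (M.law y)) :
    Integrable (fun ω => v (ω 1)) (M.law y) := by
  have := M.prob y
  refine (hu.add (integrable_const c)).mono' (hv.comp (measurable_pi_apply 1)).aestronglyMeasurable
    (ae_of_all _ fun ω => ?_)
  rw [Real.norm_of_nonneg (hv0 _)]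
  exact hvu (ω 1)

theorem Pr_nonneg (hv0 : 0 ≤ v) : 0 ≤ Pr M v :=
  fun _ => integral_nonneg fun ω => hv0 (ω 1)

theorem Pr_le_add_const (hvu : ∀ z, v z ≤ u z + c)
    (hv : Integrable (fun ω => v (ω 1)) (M.law y))
    (hu : Integrable (fun ω => u (ω 1)) (M.law y)) : Pr M v y ≤ Pr M u y + c := by
  have := M.prob y
  calc Pr M v y ≤ ∫ ω, (u (ω 1) + c) ∂M.law y :=
        integral_mono hv (hu.add (integrable_const c)) fun ω => hvu (ω 1)
    _ = Pr M u y + c := by simp [Pr, integral_add hu (integrable_const c)]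

theorem Pr_sub (hf : Integrable (fun ω => f (ω 1)) (M.law y))
    (hg : Integrable (fun ω => g (ω 1)) (M.law y)) :
    Pr M (fun z => f z - g z) y = Pr M f y - Pr M g y :=
  integral_sub hf hg

theorem iterate_Pr_bounds (hu : Measurable u) (hu0 : 0 ≤ u)
    (hint : ∀ y, Integrable (fun ω => u (ω 1)) (M.law y)) (hb : ∀ y, Pr M u y ≤ u y + b)
    (k : ℕ) : Measurable ((Pr M)^[k] u) ∧ 0 ≤ (Pr M)^[k] u ∧
      ∀ y, (Pr M)^[k] u y ≤ u y + k * b := by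
  induction k with
  | zero => exact ⟨hu, hu0, fun y => by simp⟩
  | succ k ih =>
    obtain ⟨hm, h0, hle⟩ := ih
    rw [Function.iterate_succ_apply']
    refine ⟨measurable_Pr M hm, Pr_nonneg M h0, fun y => ?_⟩
    have := Pr_le_add_const M hle (integrable_comp_one_of_le M hm h0 hle (hint y)) (hint y)
    push_cast
    linarith [hb y]

theorem integrable_iterate_Pr_comp_one (hu : Measurable u) (hu0 : 0 ≤ u)
    (hint : ∀ y, Integrable (fun ω => u (ω 1)) (M.law y)) (hb : ∀ y, Pr M u y ≤ u y + b)
    (k : ℕ) (y : X) : Integrable (fun ω => (Pr M)^[k] u (ω 1)) (M.law y) :=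
  have ⟨hm, h0, hle⟩ := iterate_Pr_bounds M hu hu0 hint hb k
  integrable_comp_one_of_le M hm h0 hle (hint y)

theorem iterate_Pr_sub_eq (hu : Measurable u) (hu0 : 0 ≤ u)
    (hint : ∀ y, Integrable (fun ω => u (ω 1)) (M.law y)) (hb : ∀ y, Pr M u y ≤ u y + b)
    (k : ℕ) :
    (Pr M)^[k] (fun y => u y - Pr M u y) = fun y => (Pr M)^[k] u y - (Pr M)^[k + 1] u y := by
  induction k with
  | zero => rfl
  | succ k ih =>
    funext y
    have hint' := integrable_iterate_Pr_comp_one M hu hu0 hint hb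
    rw [Function.iterate_succ_apply', ih, Pr_sub M (hint' k y) (hint' (k + 1) y)]
    simp only [Function.iterate_succ_apply']

end Iterates

theorem stmt10_general (M : MarkovChain X) (τ : (ℕ → X) → ℕ∞)
    (u : X → ℝ) (hu : IsDrift M τ u) (x : X) (α : ℝ) (hα : 0 ≤ α) :
    ∀ n : ℕ, ∑ k ∈ Finset.range (n + 1),
        ((Pr M)^[k] (fun y => u y - Pr M u y) x) / ((k : ℝ) + 1) ^ α ≤ u x := by
  intro n
  have hu0 : 0 ≤ u := fun y => zero_le_one.trans (hu.one_le y)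
  have hPu : ∀ y, Pr M u y ≤ u y + Bu M u := fun y => by
    have := le_csSup hu.bdd ⟨y, rfl⟩
    unfold Bu
    linarith
  have hw : Antitone fun k : ℕ => (((k : ℝ) + 1) ^ α)⁻¹ := fun i j hij =>
    inv_anti₀ (by positivity) (Real.rpow_le_rpow (by positivity) (by gcongr) hα)
  calc _ = ∑ k ∈ Finset.range (n + 1),
        ((Pr M)^[k] u x - (Pr M)^[k + 1] u x) * (((k : ℝ) + 1) ^ α)⁻¹ := by
        simp only [iterate_Pr_sub_eq M hu.meas hu0 hu.int_one hPu, div_eq_mul_inv]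
    _ ≤ (Pr M)^[0] u x * ((((0 : ℕ) : ℝ) + 1) ^ α)⁻¹ :=
        sum_range_sub_mul_le_of_antitone
          (fun k => (iterate_Pr_bounds M hu.meas hu0 hu.int_one hPu k).2.1 x) hw
          (fun k => by positivity) (n + 1)
    _ = u x := by simp

/-- Lemma 3.1 (Abel summation): for a drift function `u`, any `x` and any `α ≥ 0`,
`sup_n ∑_{k=0}^{n} P^k(u - Pu)(x)/(k+1)^α ≤ u(x)`. -/
theorem stmt10 (M : MarkovChain X) (τ : (ℕ → X) → ℕ∞)
    (hst : IsPathStoppingTime τ) (hθ : ThetaCompatible M τ)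
    (u : X → ℝ) (hu : IsDrift M τ u) (x : X) (α : ℝ) (hα : 0 ≤ α) :
    ∀ n : ℕ, ∑ k ∈ Finset.range (n + 1),
        ((Pr M)^[k] (fun y => u y - Pr M u y) x) / ((k : ℝ) + 1) ^ α ≤ u x :=
  stmt10_general M τ u hu x α hα

end
end

section
/- Let ρ be a Borel probability measure on ℝ having a finite first moment and negative drift ∫ y dρ(y) < 0. Then for the random walk on ℝ₊ driven by ρ and the stopping time τ = inf{n ≥ 1 : X_{n−1} + Y_n ≤ 0}, one has 𝔼_x τ < ∞ for every x ∈ ℝ₊ (in particular τ is ℙ_x-a.s. finite), and the formula μ(f) = (1/𝔼₀τ)·𝔼₀[Σ_{k=0}^{τ−1} f(X_k)], for bounded borelian f, defines a P-invariant probability measure μ on ℝ₊. -/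
open MeasureTheory Filter Set Topology
open scoped ENNReal NNReal ENat

noncomputable section

/-- The random walk on `ℝ₊` driven by the increments `(Y_n)_{n ≥ 1}` and started at `x`:
`X_0 = x`, `X_{n+1} = max (X_n + Y_{n+1}, 0)`. -/
def walk {Ω : Type*} (Y : ℕ → Ω → ℝ) (x : ℝ) : ℕ → Ω → ℝ
  | 0 => fun _ => x
  | n + 1 => fun ω => max (walk Y x n ω + Y (n + 1) ω) 0

/-- The stopping time `τ = inf {n ≥ 1 | X_{n-1} + Y_n ≤ 0}`, with value `∞` if the walk
never attempts to cross `0`. -/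
def hitTime {Ω : Type*} (Y : ℕ → Ω → ℝ) (x : ℝ) (ω : Ω) : ℕ∞ :=
  sInf ((fun n : ℕ => (n : ℕ∞)) '' {n : ℕ | 1 ≤ n ∧ walk Y x (n - 1) ω + Y n ω ≤ 0})

/-- `(Y_n)` is an iid sequence of law `ρ` on the probability space `(Ω, P)`. -/
def IsIIDSeq {Ω : Type*} [MeasurableSpace Ω] (P : Measure Ω) (Y : ℕ → Ω → ℝ)
    (ρ : Measure ℝ) : Prop :=
  (∀ n, Measurable (Y n)) ∧ (∀ n, Measure.map (Y n) P = ρ) ∧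
    ProbabilityTheory.iIndepFun Y P

/-- The Markov operator of the walk: `Pf(x) = ∫ f(max(x+y,0)) dρ(y)`. -/
def Pw (ρ : Measure ℝ) (f : ℝ → ℝ) (x : ℝ) : ℝ := ∫ y, f (max (x + y) 0) ∂ρ

/-- The Markov operator of the walk, acting on nonnegative functions. -/
def PwE (ρ : Measure ℝ) (f : ℝ → ℝ≥0∞) (x : ℝ) : ℝ≥0∞ := ∫⁻ y, f (max (x + y) 0) ∂ρ

/-- The functions `u_s(x) = 1 + |x|^s`. -/
def us (s : ℝ) (x : ℝ) : ℝ := 1 + |x| ^ s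

/-- `𝔼_x τ`, with values in `[0,∞]`. -/
def EtauW {Ω : Type*} [MeasurableSpace Ω] (P : Measure Ω) (Y : ℕ → Ω → ℝ) (x : ℝ) :
    ℝ≥0∞ :=
  ∫⁻ ω, (hitTime Y x ω : ℝ≥0∞) ∂P

/-- The induced operator of the walk: `Qg(x) = ∫_{τ<∞} g(X_τ) dℙ_x`. -/
def Qw {Ω : Type*} [MeasurableSpace Ω] (P : Measure Ω) (Y : ℕ → Ω → ℝ) (g : ℝ → ℝ)
    (x : ℝ) : ℝ :=
  ∫ ω in {ω | hitTime Y x ω ≠ ⊤}, g (walk Y x (hitTime Y x ω).toNat ω) ∂P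

/-- `μ` is the measure defined by `μ(A) = 𝔼₀[∑_{k<τ} 𝟙_A(X_k)] / 𝔼₀ τ`. -/
def IsStatMeasure {Ω : Type*} [MeasurableSpace Ω] (P : Measure Ω) (Y : ℕ → Ω → ℝ)
    (μ : Measure ℝ) : Prop :=
  ∀ A : Set ℝ, MeasurableSet A →
    μ A = (∫⁻ ω, ∑ k ∈ Finset.range (hitTime Y 0 ω).toNat,
        A.indicator (fun _ => (1 : ℝ≥0∞)) (walk Y 0 k ω) ∂P) / EtauW P Y 0

/-- The constant `B_u = sup_{x ≥ 0} (Pu - u) + 1` for the walk. -/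
def BuW (ρ : Measure ℝ) (u : ℝ → ℝ) : ℝ :=
  sSup ((fun x => Pw ρ u x - u x) '' Set.Ici 0) + 1

/-- The weight `u - Pu + B_u` defining the space `𝓔¹_u` for the walk. -/
def wEW (ρ : Measure ℝ) (u : ℝ → ℝ) : ℝ → ℝ := fun x => u x - Pw ρ u x + BuW ρ u

/-- Membership in the weighted space `𝓕¹_v` of functions on `ℝ₊`. -/
def MemWOn (v f : ℝ → ℝ) : Prop :=
  Measurable f ∧ ∃ C : ℝ, ∀ x ∈ Set.Ici (0 : ℝ), |f x| ≤ C * v x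

/-- The norm of the weighted space `𝓕¹_v` of functions on `ℝ₊`. -/
def normWOn (v f : ℝ → ℝ) : ℝ := ⨆ x : Set.Ici (0 : ℝ), |f x.1| / v x.1

open ProbabilityTheory

lemma tsum_ite_lt_eq_sum_range {t : ℕ∞} (ht : t ≠ ⊤) (g : ℕ → ℝ≥0∞) :
    ∑' k : ℕ, (if (k : ℕ∞) < t then g k else 0) = ∑ k ∈ Finset.range t.toNat, g k := by
  lift t to ℕ using ht
  rw [tsum_eq_sum (s := Finset.range t) fun k hk => if_neg (by simpa using hk)]
  exact Finset.sum_congr rfl fun k hk => if_pos (by simpa using hk)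

lemma ENat.toENNReal_eq_tsum_ite (t : ℕ∞) :
    (t : ℝ≥0∞) = ∑' k : ℕ, if (k : ℕ∞) < t then 1 else 0 := by
  induction t using ENat.recTopCoe with
  | top => simp
  | coe m => rw [tsum_ite_lt_eq_sum_range (ENat.natCast_ne_top m)]; simp

lemma lintegral_comp_of_indepFun {Ω β γ : Type*} [MeasurableSpace Ω] [MeasurableSpace β]
    [MeasurableSpace γ] {P : Measure Ω} [IsFiniteMeasure P] {W : Ω → β} {V : Ω → γ}
    (hWV : IndepFun W V P) (hW : Measurable W) (hV : Measurable V) {G : β × γ → ℝ≥0∞}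
    (hG : Measurable G) :
    ∫⁻ ω, G (W ω, V ω) ∂P = ∫⁻ ω, ∫⁻ y, G (W ω, y) ∂(P.map V) ∂P := by
  rw [← lintegral_map hG (hW.prodMk hV),
    (indepFun_iff_map_prod_eq_prod_map_map hW.aemeasurable hV.aemeasurable).mp hWV,
    lintegral_prod _ hG.aemeasurable, lintegral_map hG.lintegral_prod_right' hW]

lemma exists_integral_max_neg_lt {ρ : Measure ℝ} [IsFiniteMeasure ρ]
    (hmom : Integrable (fun y => y) ρ) {c : ℝ}
    (h : ∫ y, y ∂ρ < c) : ∃ M : ℕ, ∫ y, max y (-(M : ℝ)) ∂ρ < c := by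
  have htendsto : Tendsto (fun M : ℕ => ∫ y, max y (-(M : ℝ)) ∂ρ) atTop (𝓝 (∫ y, y ∂ρ)) := by
    refine integral_tendsto_of_tendsto_of_antitone (fun M => hmom.sup (integrable_const _)) hmom
      (ae_of_all _ fun y M N hMN => max_le_max le_rfl (neg_le_neg (Nat.cast_le.mpr hMN)))
      (ae_of_all _ fun y => tendsto_atTop_of_eventually_const (i₀ := ⌈-y⌉₊) fun M hM => ?_)
    refine max_eq_left ?_
    have := (Nat.le_ceil (-y)).trans (Nat.cast_le.mpr hM)
    linarith
  exact (htendsto.eventually_lt_const h).exists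

lemma measurable_PwE {ρ : Measure ℝ} [SFinite ρ] {f : ℝ → ℝ≥0∞} (hf : Measurable f) :
    Measurable (PwE ρ f) :=
  (hf.comp ((measurable_fst.add measurable_snd).max measurable_const)).lintegral_prod_right'

section RandomWalk

variable {Ω : Type*}

section Pathwise

variable {Y Z : ℕ → Ω → ℝ} {x : ℝ} {ω : Ω} {k : ℕ}

lemma walk_succ (n : ℕ) : walk Y x (n + 1) ω = max (walk Y x n ω + Y (n + 1) ω) 0 := rfl

lemma walk_nonneg (hx : 0 ≤ x) : ∀ n, 0 ≤ walk Y x n ω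
  | 0 => hx
  | _ + 1 => le_max_right _ _

lemma walk_mono (h : ∀ n ω, Y n ω ≤ Z n ω) : ∀ n, walk Y x n ω ≤ walk Z x n ω
  | 0 => le_rfl
  | n + 1 => max_le_max (add_le_add (walk_mono h n) (h _ _)) le_rfl

lemma one_le_hitTime : 1 ≤ hitTime Y x ω :=
  le_sInf <| by rintro _ ⟨n, hn, rfl⟩; exact Nat.one_le_cast.mpr hn.1

lemma hitTime_mono (h : ∀ n ω, Y n ω ≤ Z n ω) : hitTime Y x ω ≤ hitTime Z x ω :=
  sInf_le_sInf <| image_mono fun _ hn =>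
    ⟨hn.1, (add_le_add (walk_mono h _) (h _ _)).trans hn.2⟩

lemma lt_hitTime_iff :
    (k : ℕ∞) < hitTime Y x ω ↔ ∀ j, 1 ≤ j → j ≤ k → 0 < walk Y x (j - 1) ω + Y j ω := by
  rw [← ENat.add_one_le_iff (ENat.natCast_ne_top k), hitTime, le_sInf_iff, forall_mem_image]
  simp only [mem_ofPred_eq, and_imp]
  norm_cast
  refine forall_congr' fun j =>
    ⟨fun h h1 hjk => lt_of_not_ge fun hle => by have := h h1 hle; omega, fun h h1 hle => ?_⟩
  by_contra hkj
  exact (h h1 (by omega)).not_ge hle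

lemma exists_eq_hitTime (h : hitTime Y x ω ≠ ⊤) :
    ∃ n, (1 ≤ n ∧ walk Y x (n - 1) ω + Y n ω ≤ 0) ∧ (n : ℕ∞) = hitTime Y x ω := by
  refine csInf_mem (α := ℕ∞) (s := (fun n : ℕ => (n : ℕ∞)) ''
    {n | 1 ≤ n ∧ walk Y x (n - 1) ω + Y n ω ≤ 0}) (nonempty_iff_ne_empty.mpr fun hempty => h ?_)
  rw [hitTime, hempty, sInf_empty]

lemma walk_hitTime (h : hitTime Y x ω ≠ ⊤) : walk Y x (hitTime Y x ω).toNat ω = 0 := by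
  obtain ⟨n, ⟨hn, hle⟩, hτ⟩ := exists_eq_hitTime h
  obtain ⟨m, rfl⟩ : ∃ m, n = m + 1 := ⟨n - 1, by omega⟩
  rw [← hτ, ENat.toNat_natCast, walk_succ]
  exact max_eq_right hle

lemma walk_eq_add_sum_indicator : ∀ {n : ℕ}, (n : ℕ∞) < hitTime Y x ω →
    walk Y x n ω =
      x + ∑ k ∈ Finset.range n, {ω | (k : ℕ∞) < hitTime Y x ω}.indicator (Y (k + 1)) ω
  | 0, _ => by simp [walk]
  | n + 1, h => by
    have hn : (n : ℕ∞) < hitTime Y x ω := lt_of_le_of_lt (by norm_cast; omega) h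
    have hpos := lt_hitTime_iff.mp h (n + 1) le_add_self le_rfl
    rw [Nat.add_sub_cancel] at hpos
    rw [walk_succ, max_eq_left hpos.le, walk_eq_add_sum_indicator hn, Finset.sum_range_succ,
      indicator_of_mem (show ω ∈ {ω | (n : ℕ∞) < hitTime Y x ω} from hn)]
    ring

lemma neg_le_add_sum_indicator_lt_hitTime (hx : 0 ≤ x) {M : ℝ} (hM : 0 ≤ M)
    (hYM : ∀ n, -M ≤ Y n ω) : ∀ n,
    -M ≤ x + ∑ k ∈ Finset.range n, {ω | (k : ℕ∞) < hitTime Y x ω}.indicator (Y (k + 1)) ω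
  | 0 => by simp; linarith
  | n + 1 => by
    rw [Finset.sum_range_succ, ← add_assoc]
    by_cases h : (n : ℕ∞) < hitTime Y x ω
    · rw [indicator_of_mem (show ω ∈ {ω | (n : ℕ∞) < hitTime Y x ω} from h),
        ← walk_eq_add_sum_indicator h]
      linarith [walk_nonneg (Y := Y) (ω := ω) hx n, hYM (n + 1)]
    · rw [indicator_of_notMem (s := {ω | (n : ℕ∞) < hitTime Y x ω}) h, add_zero]
      exact neg_le_add_sum_indicator_lt_hitTime hx hM hYM n

lemma sum_range_hitTime_walk_succ {M : Type*} [AddCommMonoid M] (g : ℝ → M)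
    (h : hitTime Y 0 ω ≠ ⊤) :
    ∑ k ∈ Finset.range (hitTime Y 0 ω).toNat, g (walk Y 0 (k + 1) ω) =
      ∑ k ∈ Finset.range (hitTime Y 0 ω).toNat, g (walk Y 0 k ω) := by
  obtain ⟨m, hm⟩ : ∃ m, (hitTime Y 0 ω).toNat = m + 1 :=
    ⟨(hitTime Y 0 ω).toNat - 1, by
      have := ENat.toNat_le_toNat one_le_hitTime h
      simp at this; omega⟩
  have hτ := walk_hitTime h
  rw [hm] at hτ ⊢
  rw [Finset.sum_range_succ, Finset.sum_range_succ', hτ]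
  rfl

lemma hitTime_toENNReal_eq_tsum (x : ℝ) (ω : Ω) :
    (hitTime Y x ω : ℝ≥0∞) = ∑' k : ℕ, {ω | (k : ℕ∞) < hitTime Y x ω}.indicator 1 ω := by
  simp only [indicator_apply, mem_ofPred_eq, Pi.one_apply]
  exact ENat.toENNReal_eq_tsum_ite _

end Pathwise

variable [MeasurableSpace Ω] {P : Measure Ω}

section Measurability

variable {Y : ℕ → Ω → ℝ} (hY : ∀ n, Measurable (Y n))
include hY

lemma measurable_natural_of_le {j k : ℕ} (hjk : j ≤ k) :
    Measurable[Filtration.natural Y (fun n => (hY n).stronglyMeasurable) k] (Y j) :=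
  ((Filtration.stronglyAdapted_natural (fun n => (hY n).stronglyMeasurable) j).measurable).mono
    (Filtration.mono _ hjk) le_rfl

lemma measurable_walk_natural (x : ℝ) :
    ∀ k, Measurable[Filtration.natural Y (fun n => (hY n).stronglyMeasurable) k] (walk Y x k)
  | 0 => measurable_const
  | k + 1 => (((measurable_walk_natural x k).mono (Filtration.mono _ k.le_succ) le_rfl).add
      (measurable_natural_of_le hY le_rfl)).max measurable_const

lemma measurableSet_lt_hitTime_natural (x : ℝ) (k : ℕ) :
    MeasurableSet[Filtration.natural Y (fun n => (hY n).stronglyMeasurable) k]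
      {ω | (k : ℕ∞) < hitTime Y x ω} := by
  have hset : {ω | (k : ℕ∞) < hitTime Y x ω} =
      ⋂ j ∈ Finset.Icc 1 k, {ω | 0 < walk Y x (j - 1) ω + Y j ω} := by
    ext ω
    simp [lt_hitTime_iff]
  rw [hset]
  refine MeasurableSet.biInter (to_countable _) fun j hj => measurableSet_lt measurable_const ?_
  have hjk := (Finset.mem_Icc.mp hj).2
  exact ((measurable_walk_natural hY x (j - 1)).mono (Filtration.mono _ (by omega)) le_rfl).add
    (measurable_natural_of_le hY hjk)

lemma measurable_walk (x : ℝ) (k : ℕ) : Measurable (walk Y x k) :=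
  (measurable_walk_natural hY x k).mono (Filtration.le _ k) le_rfl

lemma measurableSet_lt_hitTime (x : ℝ) (k : ℕ) : MeasurableSet {ω | (k : ℕ∞) < hitTime Y x ω} :=
  Filtration.le _ k _ (measurableSet_lt_hitTime_natural hY x k)

lemma measurable_hitTime_toENNReal (x : ℝ) : Measurable fun ω => (hitTime Y x ω : ℝ≥0∞) := by
  simp_rw [hitTime_toENNReal_eq_tsum]
  exact Measurable.tsum fun k => measurable_one.indicator (measurableSet_lt_hitTime hY x k)

lemma EtauW_eq_tsum (x : ℝ) :
    EtauW P Y x = ∑' k : ℕ, P {ω | (k : ℕ∞) < hitTime Y x ω} := by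
  simp_rw [EtauW, hitTime_toENNReal_eq_tsum]
  rw [lintegral_tsum fun k =>
    (measurable_one.indicator (measurableSet_lt_hitTime hY x k)).aemeasurable]
  exact tsum_congr fun k => lintegral_indicator_one (measurableSet_lt_hitTime hY x k)

lemma ae_hitTime_ne_top {x : ℝ} (hfin : EtauW P Y x ≠ ⊤) :
    ∀ᵐ ω ∂P, hitTime Y x ω ≠ ⊤ := by
  filter_upwards [ae_lt_top (measurable_hitTime_toENNReal hY x) hfin] with ω hω
  simpa [lt_top_iff_ne_top] using hω

lemma indepFun_succ_of_measurable_natural (hind : iIndepFun Y P)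
    {β : Type*} [MeasurableSpace β] {W : Ω → β} {k : ℕ}
    (hW : Measurable[Filtration.natural Y (fun n => (hY n).stronglyMeasurable) k] W) :
    IndepFun W (Y (k + 1)) P :=
  indep_of_indep_of_le_left (hind.indep_comap_natural_of_lt _ k.lt_succ_self).symm hW.comap_le

end Measurability

lemma integral_indicator_lt_hitTime_succ {Z : ℕ → Ω → ℝ} (hZ : ∀ n, Measurable (Z n))
    (hind : iIndepFun Z P) (x : ℝ) (k : ℕ) :
    ∫ ω, {ω | (k : ℕ∞) < hitTime Z x ω}.indicator (Z (k + 1)) ω ∂P =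
      P.real {ω | (k : ℕ∞) < hitTime Z x ω} * ∫ ω, Z (k + 1) ω ∂P := by
  set A := {ω | (k : ℕ∞) < hitTime Z x ω}
  have hA : Measurable[Filtration.natural Z (fun n => (hZ n).stronglyMeasurable) k]
      (A.indicator fun _ => (1 : ℝ)) :=
    measurable_const.indicator (measurableSet_lt_hitTime_natural hZ x k)
  have hindep : IndepFun (A.indicator fun _ => (1 : ℝ)) (Z (k + 1)) P :=
    indepFun_succ_of_measurable_natural hZ hind hA
  calc ∫ ω, A.indicator (Z (k + 1)) ω ∂P
      = ∫ ω, (A.indicator (fun _ => (1 : ℝ)) * Z (k + 1)) ω ∂P := by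
        congr with ω
        simp [indicator_apply]
    _ = P.real A * ∫ ω, Z (k + 1) ω ∂P := by
        rw [hindep.integral_mul_eq_mul_integral
          (hA.mono (Filtration.le _ k) le_rfl).aestronglyMeasurable (hZ _).aestronglyMeasurable,
          integral_indicator_const _ (measurableSet_lt_hitTime hZ x k), smul_eq_mul, mul_one]

theorem EtauW_le_of_integral_neg [IsProbabilityMeasure P] {Z : ℕ → Ω → ℝ}
    (hZ : ∀ n, Measurable (Z n)) (hind : iIndepFun Z P) (hint : ∀ n, Integrable (Z n) P)
    {m : ℝ} (hmean : ∀ n, ∫ ω, Z n ω ∂P = m) (hm : m < 0) {M : ℝ} (hM : 0 ≤ M)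
    (hZM : ∀ n ω, -M ≤ Z n ω) {x : ℝ} (hx : 0 ≤ x) :
    EtauW P Z x ≤ ENNReal.ofReal ((x + M) / -m) := by
  set A : ℕ → Set Ω := fun k => {ω | (k : ℕ∞) < hitTime Z x ω}
  have hpartial : ∀ n, ∑ k ∈ Finset.range n, P.real (A k) ≤ (x + M) / -m := by
    intro n
    have hint' : ∀ k ∈ Finset.range n, Integrable ((A k).indicator (Z (k + 1))) P :=
      fun k _ => (hint _).indicator (measurableSet_lt_hitTime hZ x k)
    have hwald : ∫ ω, ∑ k ∈ Finset.range n, (A k).indicator (Z (k + 1)) ω ∂P =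
        (∑ k ∈ Finset.range n, P.real (A k)) * m := by
      rw [integral_finsetSum _ hint', Finset.sum_mul]
      exact Finset.sum_congr rfl fun k _ => by
        rw [integral_indicator_lt_hitTime_succ hZ hind x k, hmean]
    have hlower : -(x + M) ≤ ∫ ω, ∑ k ∈ Finset.range n, (A k).indicator (Z (k + 1)) ω ∂P := by
      have := integral_mono (integrable_const (-(x + M))) (integrable_finsetSum _ hint')
        fun ω => by linarith [neg_le_add_sum_indicator_lt_hitTime hx hM (hZM · ω) n]
      simpa using this
    rw [le_div_iff₀ (neg_pos.mpr hm)]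
    linarith
  rw [EtauW_eq_tsum hZ]
  refine ENNReal.tsum_le_of_sum_range_le fun n => ?_
  rw [ENNReal.le_ofReal_iff_toReal_le (ENNReal.sum_ne_top.mpr fun _ _ => measure_ne_top _ _)
    (div_nonneg (by linarith) (by linarith)),
    ENNReal.toReal_sum fun _ _ => measure_ne_top _ _]
  exact hpartial n

theorem EtauW_ne_top [IsProbabilityMeasure P] {ρ : Measure ℝ} [IsFiniteMeasure ρ]
    {Y : ℕ → Ω → ℝ} (hiid : IsIIDSeq P Y ρ) (hmom : Integrable (fun y => y) ρ)
    (hdrift : ∫ y, y ∂ρ < 0) {x : ℝ} (hx : 0 ≤ x) : EtauW P Y x ≠ ⊤ := by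
  obtain ⟨hY, hlaw, hind⟩ := hiid
  obtain ⟨M, hM⟩ := exists_integral_max_neg_lt hmom hdrift
  set g : ℝ → ℝ := fun y => max y (-(M : ℝ))
  have hg : Measurable g := measurable_id.max measurable_const
  have hgint : Integrable g ρ := hmom.sup (integrable_const _)
  have hZ : ∀ n, Measurable (g ∘ Y n) := fun n => hg.comp (hY n)
  have hint : ∀ n, Integrable (g ∘ Y n) P := fun n =>
    (hlaw n ▸ hgint).comp_measurable (hY n)
  have hmean : ∀ n, ∫ ω, (g ∘ Y n) ω ∂P = ∫ y, g y ∂ρ := fun n => by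
    rw [← hlaw n, integral_map (hY n).aemeasurable hg.aestronglyMeasurable]
    rfl
  have hle : EtauW P Y x ≤ EtauW P (fun n => g ∘ Y n) x :=
    lintegral_mono fun ω => ENat.toENNReal_mono (hitTime_mono fun _ _ => le_max_left _ _)
  exact ne_top_of_le_ne_top ENNReal.ofReal_ne_top <| hle.trans <|
    EtauW_le_of_integral_neg hZ (hind.comp _ fun _ => hg) hint hmean hM M.cast_nonneg
      (fun _ _ => le_max_right _ _) hx

lemma one_le_EtauW [IsProbabilityMeasure P] (Y : ℕ → Ω → ℝ) (x : ℝ) : 1 ≤ EtauW P Y x :=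
  calc 1 = ∫⁻ _, 1 ∂P := by simp
    _ ≤ EtauW P Y x := lintegral_mono fun _ => by simpa using ENat.toENNReal_mono one_le_hitTime

lemma setLIntegral_PwE_walk [IsFiniteMeasure P] {ρ : Measure ℝ} {Y : ℕ → Ω → ℝ}
    (hiid : IsIIDSeq P Y ρ) {f : ℝ → ℝ≥0∞} (hf : Measurable f) (x : ℝ) (k : ℕ) :
    ∫⁻ ω in {ω | (k : ℕ∞) < hitTime Y x ω}, PwE ρ f (walk Y x k ω) ∂P =
      ∫⁻ ω in {ω | (k : ℕ∞) < hitTime Y x ω}, f (walk Y x (k + 1) ω) ∂P := by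
  obtain ⟨hY, hlaw, hind⟩ := hiid
  set A := {ω | (k : ℕ∞) < hitTime Y x ω}
  have hW : Measurable[Filtration.natural Y (fun n => (hY n).stronglyMeasurable) k]
      fun ω => (A.indicator (fun _ => (1 : ℝ≥0∞)) ω, walk Y x k ω) :=
    (measurable_const.indicator (measurableSet_lt_hitTime_natural hY x k)).prodMk
      (measurable_walk_natural hY x k)
  have key := lintegral_comp_of_indepFun (indepFun_succ_of_measurable_natural hY hind hW)
    (hW.mono (Filtration.le _ k) le_rfl) (hY (k + 1))
    (G := fun p => p.1.1 * f (max (p.1.2 + p.2) 0)) (by fun_prop)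
  rw [hlaw] at key
  rw [← lintegral_indicator (measurableSet_lt_hitTime hY x k),
    ← lintegral_indicator (measurableSet_lt_hitTime hY x k)]
  simp only at key
  calc _ = ∫⁻ ω, ∫⁻ y, A.indicator (fun _ => 1) ω * f (max (walk Y x k ω + y) 0) ∂ρ ∂P :=
        lintegral_congr fun ω => by by_cases h : (k : ℕ∞) < hitTime Y x ω <;> simp [A, h, PwE]
    _ = ∫⁻ ω, A.indicator (fun _ => 1) ω * f (max (walk Y x k ω + Y (k + 1) ω) 0) ∂P := key.symm
    _ = _ := lintegral_congr fun ω => by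
      by_cases h : (k : ℕ∞) < hitTime Y x ω <;> simp [A, h, walk_succ]

def occupationMeasure (P : Measure Ω) (Y : ℕ → Ω → ℝ) (x : ℝ) : Measure ℝ :=
  Measure.sum fun k : ℕ => (P.restrict {ω | (k : ℕ∞) < hitTime Y x ω}).map (walk Y x k)

section OccupationMeasure

variable {Y : ℕ → Ω → ℝ} (hY : ∀ n, Measurable (Y n)) {x : ℝ}
include hY

lemma lintegral_occupationMeasure {g : ℝ → ℝ≥0∞} (hg : Measurable g) :
    ∫⁻ r, g r ∂occupationMeasure P Y x =
      ∑' k : ℕ, ∫⁻ ω in {ω | (k : ℕ∞) < hitTime Y x ω}, g (walk Y x k ω) ∂P := by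
  simp_rw [occupationMeasure, lintegral_sum_measure, lintegral_map hg (measurable_walk hY x _)]

lemma tsum_setLIntegral_lt_hitTime (hfin : EtauW P Y x ≠ ⊤) {h : ℕ → Ω → ℝ≥0∞}
    (hh : ∀ k, Measurable (h k)) :
    ∑' k : ℕ, ∫⁻ ω in {ω | (k : ℕ∞) < hitTime Y x ω}, h k ω ∂P =
      ∫⁻ ω, ∑ k ∈ Finset.range (hitTime Y x ω).toNat, h k ω ∂P := by
  simp_rw [← lintegral_indicator (measurableSet_lt_hitTime hY x _)]
  rw [← lintegral_tsum fun k => ((hh k).indicator (measurableSet_lt_hitTime hY x k)).aemeasurable]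
  refine lintegral_congr_ae ?_
  filter_upwards [ae_hitTime_ne_top hY hfin] with ω hω
  simp only [indicator_apply, mem_ofPred_eq]
  exact tsum_ite_lt_eq_sum_range hω _

lemma occupationMeasure_apply (hfin : EtauW P Y x ≠ ⊤) {S : Set ℝ} (hS : MeasurableSet S) :
    occupationMeasure P Y x S = ∫⁻ ω, ∑ k ∈ Finset.range (hitTime Y x ω).toNat,
      S.indicator (fun _ => (1 : ℝ≥0∞)) (walk Y x k ω) ∂P := by
  rw [← lintegral_indicator_one hS, lintegral_occupationMeasure hY (measurable_one.indicator hS),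
    tsum_setLIntegral_lt_hitTime hY hfin (h := fun k ω => S.indicator 1 (walk Y x k ω))
      fun k => (measurable_one.indicator hS).comp (measurable_walk hY x k)]
  rfl

lemma occupationMeasure_univ : occupationMeasure P Y x univ = EtauW P Y x := by
  simp [occupationMeasure, Measure.sum_apply, Measure.map_apply (measurable_walk hY x _),
    EtauW_eq_tsum hY]

lemma occupationMeasure_Iio_zero (hx : 0 ≤ x) : occupationMeasure P Y x (Iio 0) = 0 := by
  have hempty : ∀ k, walk Y x k ⁻¹' Iio 0 = ∅ := fun k =>
    eq_empty_of_forall_notMem fun ω hω => (walk_nonneg hx k).not_gt hω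
  simp [occupationMeasure, Measure.sum_apply, Measure.map_apply (measurable_walk hY x _), hempty]

end OccupationMeasure

lemma lintegral_PwE_occupationMeasure [IsFiniteMeasure P] {ρ : Measure ℝ} [SFinite ρ]
    {Y : ℕ → Ω → ℝ} (hiid : IsIIDSeq P Y ρ) (hfin : EtauW P Y 0 ≠ ⊤) {f : ℝ → ℝ≥0∞}
    (hf : Measurable f) :
    ∫⁻ r, PwE ρ f r ∂occupationMeasure P Y 0 = ∫⁻ r, f r ∂occupationMeasure P Y 0 := by
  have hY := hiid.1
  rw [lintegral_occupationMeasure hY (measurable_PwE hf), lintegral_occupationMeasure hY hf]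
  simp_rw [setLIntegral_PwE_walk hiid hf]
  rw [tsum_setLIntegral_lt_hitTime hY hfin (h := fun k ω => f (walk Y 0 (k + 1) ω))
      fun k => hf.comp (measurable_walk hY 0 (k + 1)),
    tsum_setLIntegral_lt_hitTime hY hfin (h := fun k ω => f (walk Y 0 k ω))
      fun k => hf.comp (measurable_walk hY 0 k)]
  refine lintegral_congr_ae ?_
  filter_upwards [ae_hitTime_ne_top hY hfin] with ω hω using sum_range_hitTime_walk_succ f hω

end RandomWalk

/-- Proposition 4.1: if `ρ` has a finite first moment and a negative drift then
`𝔼_x τ < ∞` for every `x ≥ 0`, and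
`μ(f) = (1/𝔼₀τ) 𝔼₀[∑_{k<τ} f(X_k)]` defines a `P`-invariant probability measure on
`ℝ₊`. -/
theorem stmt15 {Ω : Type*} [MeasurableSpace Ω] (P : Measure Ω) [IsProbabilityMeasure P]
    (ρ : Measure ℝ) [IsProbabilityMeasure ρ] (Y : ℕ → Ω → ℝ) (hiid : IsIIDSeq P Y ρ)
    (hmom : Integrable (fun y => y) ρ) (hdrift : ∫ y, y ∂ρ < 0) :
    (∀ x : ℝ, 0 ≤ x → EtauW P Y x ≠ ⊤) ∧
    ∃ μ : Measure ℝ, IsProbabilityMeasure μ ∧ μ (Set.Iio 0) = 0 ∧ IsStatMeasure P Y μ ∧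
      ∀ f : ℝ → ℝ≥0∞, Measurable f → ∫⁻ x, PwE ρ f x ∂μ = ∫⁻ x, f x ∂μ := by
  have hfin : ∀ x : ℝ, 0 ≤ x → EtauW P Y x ≠ ⊤ := fun x hx => EtauW_ne_top hiid hmom hdrift hx
  have hfin0 := hfin 0 le_rfl
  have hpos : EtauW P Y 0 ≠ 0 := (zero_lt_one.trans_le (one_le_EtauW Y 0)).ne'
  refine ⟨hfin, (EtauW P Y 0)⁻¹ • occupationMeasure P Y 0, ⟨?_⟩, ?_, fun A hA => ?_,
    fun f hf => ?_⟩
  · rw [Measure.smul_apply, occupationMeasure_univ hiid.1, smul_eq_mul,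
      ENNReal.inv_mul_cancel hpos hfin0]
  · rw [Measure.smul_apply, occupationMeasure_Iio_zero hiid.1 le_rfl, smul_zero]
  · rw [Measure.smul_apply, occupationMeasure_apply hiid.1 hfin0 hA, smul_eq_mul,
      ENNReal.div_eq_inv_mul]
  · rw [lintegral_smul_measure, lintegral_smul_measure,
      lintegral_PwE_occupationMeasure hiid hfin0 hf]

end
end

section
/- Let ρ be a Borel probability measure on ℝ and s ∈ [1,∞) be such that ∫_ℝ |y|^s dρ(y) < ∞. Then lim_{x→+∞} ∫_ℝ (max(x+y,0)^s − x^s)/x^{s−1} dρ(y) = s·∫_ℝ y dρ(y). -/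
open MeasureTheory Filter Set Topology
open scoped ENNReal NNReal ENat

noncomputable section

/-!
For fixed `y` and large `x` the integrand equals `((1 + t y) ^ s - 1) / t` with `t = 1/x`,
a difference quotient of `t ↦ (1 + t y) ^ s` at `0`, so it tends to `s y`. By the mean value
theorem it is bounded by `s (1 + |y|) ^ s` for `x ≥ 1`, which is integrable because `ρ` has a
finite `s`-th moment; dominated convergence concludes.
-/

lemma tendsto_one_add_inv_mul_rpow_slope (s y : ℝ) :
    Tendsto (fun x : ℝ => ((1 + x⁻¹ * y) ^ s - 1) / x⁻¹) atTop (𝓝 (s * y)) := by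
  have hderiv : HasDerivAt (fun t : ℝ => (1 + t * y) ^ s) (s * y) 0 := by
    simpa [mul_comm] using
      (((hasDerivAt_id (0 : ℝ)).mul_const y).const_add 1).rpow_const (p := s) (Or.inl (by simp))
  have hinv : Tendsto (fun x : ℝ => x⁻¹) atTop (𝓝[≠] 0) :=
    tendsto_inv_atTop_nhdsGT_zero.mono_right (nhdsWithin_mono _ fun t ht => ne_of_gt ht)
  refine (hderiv.tendsto_slope.comp hinv).congr fun x => ?_
  simp [slope_def_field]

lemma rpow_add_sub_rpow_div_rpow_sub_one {s x y : ℝ} (hx : 0 < x) (hxy : 0 ≤ x + y) :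
    ((x + y) ^ s - x ^ s) / x ^ (s - 1) = ((1 + x⁻¹ * y) ^ s - 1) / x⁻¹ := by
  have hsplit : x + y = x * (1 + x⁻¹ * y) := by field_simp
  have hnonneg : 0 ≤ 1 + x⁻¹ * y := by
    rw [hsplit] at hxy; exact nonneg_of_mul_nonneg_right hxy hx
  rw [hsplit, Real.mul_rpow hx.le hnonneg, Real.rpow_sub_one hx.ne']
  have := (Real.rpow_pos_of_pos hx s).ne'
  field_simp

lemma tendsto_max_add_rpow_sub_div (s y : ℝ) :
    Tendsto (fun x : ℝ => (max (x + y) 0 ^ s - x ^ s) / x ^ (s - 1)) atTop (𝓝 (s * y)) := by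
  refine (tendsto_one_add_inv_mul_rpow_slope s y).congr' ?_
  filter_upwards [eventually_gt_atTop 0, eventually_ge_atTop (-y)] with x hx hxy
  rw [max_eq_left (by linarith), rpow_add_sub_rpow_div_rpow_sub_one hx (by linarith)]

lemma abs_rpow_sub_rpow_le {s a b : ℝ} (hs : 1 ≤ s) (ha : 0 ≤ a) (hb : 0 ≤ b) :
    |a ^ s - b ^ s| ≤ s * max a b ^ (s - 1) * |a - b| := by
  have hderiv : ∀ u ∈ Icc 0 (max a b),
      HasDerivWithinAt (fun u : ℝ => u ^ s) (s * u ^ (s - 1)) (Icc 0 (max a b)) u :=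
    fun u _ => (Real.hasDerivAt_rpow_const (Or.inr hs)).hasDerivWithinAt
  have hbound : ∀ u ∈ Icc 0 (max a b), ‖s * u ^ (s - 1)‖ ≤ s * max a b ^ (s - 1) := by
    rintro u ⟨hu0, hu⟩
    rw [Real.norm_eq_abs, abs_of_nonneg (by positivity)]
    gcongr
  simpa [← Real.norm_eq_abs] using
    (convex_Icc 0 (max a b)).norm_image_sub_le_of_norm_hasDerivWithin_le hderiv hbound
      ⟨hb, le_max_right a b⟩ ⟨ha, le_max_left a b⟩

lemma abs_max_add_rpow_sub_div_le {s x : ℝ} (hs : 1 ≤ s) (hx : 1 ≤ x) (y : ℝ) :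
    |(max (x + y) 0 ^ s - x ^ s) / x ^ (s - 1)| ≤ s * (1 + |y|) ^ s := by
  have hx0 : 0 < x := by linarith
  have hmax : max (max (x + y) 0) x ≤ x * (1 + |y|) := by
    refine max_le (max_le ?_ (by positivity)) ?_ <;> nlinarith [le_abs_self y, abs_nonneg y]
  have hdiff : |max (x + y) 0 - x| ≤ 1 + |y| := by
    have := abs_max_sub_max_le_abs (x + y) x 0
    rw [max_eq_left hx0.le, add_sub_cancel_left] at this
    linarith
  have hxs : 0 < x ^ (s - 1) := Real.rpow_pos_of_pos hx0 _
  rw [abs_div, abs_of_pos hxs, div_le_iff₀ hxs]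
  calc |max (x + y) 0 ^ s - x ^ s|
      ≤ s * max (max (x + y) 0) x ^ (s - 1) * |max (x + y) 0 - x| :=
        abs_rpow_sub_rpow_le hs (le_max_right _ _) hx0.le
    _ ≤ s * (x * (1 + |y|)) ^ (s - 1) * (1 + |y|) := by
        gcongr
    _ = s * (1 + |y|) ^ s * x ^ (s - 1) := by
        rw [Real.mul_rpow hx0.le (by positivity),
          Real.rpow_sub_one (by positivity : (1 + |y|) ≠ 0)]
        field_simp

lemma integrable_one_add_abs_rpow {μ : Measure ℝ} [IsFiniteMeasure μ] {s : ℝ} (hs : 1 ≤ s)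
    (h : Integrable (fun y => |y| ^ s) μ) : Integrable (fun y => (1 + |y|) ^ s) μ := by
  refine (((integrable_const 1).add h).const_mul (2 ^ (s - 1))).mono'
    (by fun_prop : Measurable _).aestronglyMeasurable (ae_of_all _ fun y => ?_)
  have := NNReal.coe_le_coe.2 (NNReal.rpow_add_le_mul_rpow_add_rpow 1 ‖y‖₊ hs)
  rw [Real.norm_eq_abs, abs_of_nonneg (by positivity)]
  simpa using this

/-- Lemma 4.2: if `∫ |y|^s dρ(y) < ∞` for some `s ≥ 1`, then
`∫ (max(x+y,0)^s - x^s)/x^{s-1} dρ(y) → s ∫ y dρ(y)` as `x → +∞`. -/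
theorem stmt16 (ρ : Measure ℝ) [IsProbabilityMeasure ρ] (s : ℝ) (hs : 1 ≤ s)
    (hmom : ∫⁻ y, ENNReal.ofReal (|y| ^ s) ∂ρ ≠ ⊤) :
    Tendsto (fun x : ℝ => ∫ y, (max (x + y) 0 ^ s - x ^ s) / x ^ (s - 1) ∂ρ) atTop
      (𝓝 (s * ∫ y, y ∂ρ)) := by
  have hmoment : Integrable (fun y : ℝ => |y| ^ s) ρ :=
    (lintegral_ofReal_ne_top_iff_integrable (by fun_prop : Measurable _).aestronglyMeasurable
      (ae_of_all _ fun y => by positivity)).1 hmom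
  rw [← integral_const_mul]
  refine tendsto_integral_filter_of_dominated_convergence (fun y => s * (1 + |y|) ^ s)
    (Eventually.of_forall fun x => (by fun_prop : Measurable _).aestronglyMeasurable)
    ?_ ((integrable_one_add_abs_rpow hs hmoment).const_mul s)
    (ae_of_all _ fun y => tendsto_max_add_rpow_sub_div s y)
  filter_upwards [eventually_ge_atTop 1] with x hx
  exact ae_of_all _ fun y => abs_max_add_rpow_sub_div_le hs hx y

end
end
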